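/- arXiv:2203.15054 — 8 statements merged into one kernel-verified Lean document; each statement's English description precedes it below -/
import Mathlib

section
/- For every positive real number s, the quantity (1 - cos(2s))/s² - sin(2s)/(2s) - 1 is negative. -/
/-! After clearing denominators with `1 - cos 2s = 2 sin² s` and `sin 2s = 2 sin s cos s`,
the claim is `F s := 2 sin² s - s sin s cos s - s² < 0`. For `s > π` this is crude, since
`2 sin² s - s sin s cos s ≤ 2 + s < s²`. On `(0, π]`, `F` vanishes to sixth order at `0`, and differentiating twice
gives `F'' s = 4 sin s (s cos s - sin s)`, which is negative on `(0, π)` because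
`(s cos s - sin s)' = -s sin s`. Three applications of the mean value theorem, starting from
`F 0 = F' 0 = 0`, bring the sign back up to `F`. -/

open Real Set

lemma neg_of_hasDerivAt_of_map_zero {f f' : ℝ → ℝ} {a x : ℝ}
    (hf : ∀ y, HasDerivAt f (f' y) y) (h0 : f 0 = 0) (hf' : ∀ y ∈ Ioo 0 a, f' y < 0)
    (hx : x ∈ Ioc 0 a) : f x < 0 := by
  obtain ⟨c, hc, hslope⟩ := exists_hasDerivAt_eq_slope f f' hx.1
    (continuous_iff_continuousAt.2 fun y => (hf y).continuousAt).continuousOn fun y _ => hf y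
  rw [h0, sub_zero, sub_zero, eq_div_iff hx.1.ne'] at hslope
  rw [← hslope]
  exact mul_neg_of_neg_of_pos (hf' c ⟨hc.1, hc.2.trans_le hx.2⟩) hx.1

lemma mul_cos_sub_sin_neg {x : ℝ} (hx : x ∈ Ioc 0 π) : x * cos x - sin x < 0 := by
  refine neg_of_hasDerivAt_of_map_zero (f := fun y => y * cos y - sin y)
    (f' := fun y => -(y * sin y)) (fun y => ?_) (by simp) (fun y hy => ?_) hx
  · exact (((hasDerivAt_id' y).mul (hasDerivAt_cos y)).sub (hasDerivAt_sin y)).congr_deriv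
      (by ring)
  · exact neg_neg_of_pos (mul_pos hy.1 (sin_pos_of_pos_of_lt_pi hy.1 hy.2))

lemma three_mul_sin_mul_cos_sub_neg {x : ℝ} (hx : x ∈ Ioc 0 π) :
    3 * sin x * cos x - x * (cos x ^ 2 - sin x ^ 2) - 2 * x < 0 := by
  refine neg_of_hasDerivAt_of_map_zero
    (f := fun y => 3 * sin y * cos y - y * (cos y ^ 2 - sin y ^ 2) - 2 * y)
    (f' := fun y => 4 * sin y * (y * cos y - sin y)) (fun y => ?_) (by simp) (fun y hy => ?_) hx
  · have hs := hasDerivAt_sin y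
    have hc := hasDerivAt_cos y
    refine ((((hs.const_mul 3).mul hc).sub ((hasDerivAt_id' y).mul ((hc.pow 2).sub (hs.pow 2)))).sub
      ((hasDerivAt_id' y).const_mul 2)).congr_deriv ?_
    simp only [Pi.sub_apply, Pi.pow_apply]
    linear_combination 2 * sin_sq_add_cos_sq y
  · exact mul_neg_of_pos_of_neg (mul_pos four_pos (sin_pos_of_pos_of_lt_pi hy.1 hy.2))
      (mul_cos_sub_sin_neg ⟨hy.1, hy.2.le⟩)

lemma two_mul_sin_sq_lt_of_le_pi {x : ℝ} (hx : x ∈ Ioc 0 π) :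
    2 * sin x ^ 2 < x ^ 2 + x * sin x * cos x := by
  rw [← sub_neg]
  refine neg_of_hasDerivAt_of_map_zero
    (f := fun y => 2 * sin y ^ 2 - (y ^ 2 + y * sin y * cos y))
    (f' := fun y => 3 * sin y * cos y - y * (cos y ^ 2 - sin y ^ 2) - 2 * y) (fun y => ?_)
    (by simp) (fun y hy => three_mul_sin_mul_cos_sub_neg ⟨hy.1, hy.2.le⟩) hx
  have hs := hasDerivAt_sin y
  have hc := hasDerivAt_cos y
  refine (((hs.pow 2).const_mul 2).sub
    (((hasDerivAt_id' y).pow 2).add (((hasDerivAt_id' y).mul hs).mul hc))).congr_deriv ?_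
  simp only [Pi.mul_apply]
  ring

lemma two_mul_sin_sq_lt {x : ℝ} (hx : 0 < x) : 2 * sin x ^ 2 < x ^ 2 + x * sin x * cos x := by
  rcases le_or_gt x π with hπ | hπ
  · exact two_mul_sin_sq_lt_of_le_pi ⟨hx, hπ⟩
  · have hx3 : 3 < x := pi_gt_three.trans hπ
    have hsc : -1 ≤ sin x * cos x := by nlinarith [sin_sq_add_cos_sq x, sq_nonneg (sin x + cos x)]
    nlinarith [sin_sq_le_one x]

theorem stmt_0 (s : ℝ) (hs : 0 < s) :
    (1 - Real.cos (2 * s)) / s ^ 2 - Real.sin (2 * s) / (2 * s) - 1 < 0 := by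
  have hF : (1 - Real.cos (2 * s)) / s ^ 2 - Real.sin (2 * s) / (2 * s) - 1
      = (2 * sin s ^ 2 - (s ^ 2 + s * sin s * cos s)) / s ^ 2 := by
    rw [cos_two_mul, cos_sq', sin_two_mul]
    field_simp
    ring
  rw [hF]
  exact div_neg_of_neg_of_pos (sub_neg.2 (two_mul_sin_sq_lt hs)) (by positivity)
end

section
/- For every positive real number s, the quantity (cos(2s) - 1)/s² + sin(2s)/(2s) + 1 is positive. -/
/-!
Multiplying by `4 s²` and writing `x = 2 s`, the claim becomes
`0 < 4 cos x - 4 + x sin x + x²`. The Taylor series of the left side starts with `x⁶ / 360`,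
and the alternating Taylor bounds `cos x ≥ 1 - x²/2 + x⁴/24 - x⁶/720` and
`sin x ≥ x - x³/6 + x⁵/120 - x⁷/5040` bound it below by `x⁶ (14 - x²) / 5040`, which is positive
for `x ≤ 7/2`. For `x > 7/2` the crude bounds `cos x ≥ -1`, `sin x ≥ -1` suffice.
-/

open Real

lemma le_of_hasDerivAt_le {f g f' g' : ℝ → ℝ} {a x : ℝ} (hf : ∀ t, HasDerivAt f (f' t) t)
    (hg : ∀ t, HasDerivAt g (g' t) t) (ha : f a ≤ g a) (hderiv : ∀ t, a ≤ t → f' t ≤ g' t)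
    (hx : a ≤ x) : f x ≤ g x := by
  have hmono : MonotoneOn (fun t => g t - f t) (Set.Ici a) := by
    refine monotoneOn_of_hasDerivWithinAt_nonneg (convex_Ici a)
      (fun t _ => ((hg t).sub (hf t)).continuousAt.continuousWithinAt)
      (fun t _ => ((hg t).sub (hf t)).hasDerivWithinAt) fun t ht => ?_
    rw [interior_Ici] at ht
    exact sub_nonneg.mpr (hderiv t (le_of_lt ht))
  have := hmono Set.self_mem_Ici hx hx
  dsimp only at this
  linarith

namespace Real

lemma cos_le_taylor_four {x : ℝ} (hx : 0 ≤ x) : cos x ≤ 1 - x ^ 2 / 2 + x ^ 4 / 24 :=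
  le_of_hasDerivAt_le (f := cos) (g := fun t => 1 - t ^ 2 / 2 + t ^ 4 / 24)
    (g' := fun t => -(t - t ^ 3 / 6)) hasDerivAt_cos
    (fun t => (((hasDerivAt_pow 2 t).div_const 2).const_sub 1).add
      ((hasDerivAt_pow 4 t).div_const 24) |>.congr_deriv (by norm_num; ring))
    (by norm_num) (fun _ ht => neg_le_neg (sin_ge_sub_cube ht)) hx

lemma sin_le_taylor_five {x : ℝ} (hx : 0 ≤ x) : sin x ≤ x - x ^ 3 / 6 + x ^ 5 / 120 :=
  le_of_hasDerivAt_le (f := sin) (g := fun t => t - t ^ 3 / 6 + t ^ 5 / 120)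
    (g' := fun t => 1 - t ^ 2 / 2 + t ^ 4 / 24) hasDerivAt_sin
    (fun t => ((hasDerivAt_id t).sub ((hasDerivAt_pow 3 t).div_const 6)).add
      ((hasDerivAt_pow 5 t).div_const 120) |>.congr_deriv (by norm_num; ring))
    (by norm_num) (fun _ ht => cos_le_taylor_four ht) hx

lemma taylor_six_le_cos {x : ℝ} (hx : 0 ≤ x) :
    1 - x ^ 2 / 2 + x ^ 4 / 24 - x ^ 6 / 720 ≤ cos x :=
  le_of_hasDerivAt_le (f := fun t => 1 - t ^ 2 / 2 + t ^ 4 / 24 - t ^ 6 / 720) (g := cos)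
    (f' := fun t => -(t - t ^ 3 / 6 + t ^ 5 / 120))
    (fun t => ((((hasDerivAt_pow 2 t).div_const 2).const_sub 1).add
      ((hasDerivAt_pow 4 t).div_const 24)).sub ((hasDerivAt_pow 6 t).div_const 720)
      |>.congr_deriv (by norm_num; ring))
    hasDerivAt_cos (by norm_num) (fun _ ht => neg_le_neg (sin_le_taylor_five ht)) hx

lemma taylor_seven_le_sin {x : ℝ} (hx : 0 ≤ x) :
    x - x ^ 3 / 6 + x ^ 5 / 120 - x ^ 7 / 5040 ≤ sin x :=
  le_of_hasDerivAt_le (f := fun t => t - t ^ 3 / 6 + t ^ 5 / 120 - t ^ 7 / 5040) (g := sin)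
    (f' := fun t => 1 - t ^ 2 / 2 + t ^ 4 / 24 - t ^ 6 / 720)
    (fun t => (((hasDerivAt_id t).sub ((hasDerivAt_pow 3 t).div_const 6)).add
      ((hasDerivAt_pow 5 t).div_const 120)).sub ((hasDerivAt_pow 7 t).div_const 5040)
      |>.congr_deriv (by norm_num; ring))
    hasDerivAt_sin (by norm_num) (fun _ ht => taylor_six_le_cos ht) hx

lemma four_mul_cos_sub_four_add_mul_sin_add_sq_pos {x : ℝ} (hx : 0 < x) :
    0 < 4 * cos x - 4 + x * sin x + x ^ 2 := by
  rcases le_or_gt x (7 / 2) with hsmall | hlarge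
  · have hcos := taylor_six_le_cos hx.le
    have hsin := mul_le_mul_of_nonneg_left (taylor_seven_le_sin hx.le) hx.le
    have hpos : 0 < x ^ 6 * (14 - x ^ 2) := mul_pos (by positivity) (by nlinarith)
    nlinarith
  · nlinarith [neg_one_le_cos x, neg_one_le_sin x]

end Real

theorem stmt_1 (s : ℝ) (hs : 0 < s) :
    0 < (Real.cos (2 * s) - 1) / s ^ 2 + Real.sin (2 * s) / (2 * s) + 1 := by
  have hkey := four_mul_cos_sub_four_add_mul_sin_add_sq_pos (mul_pos two_pos hs)
  have heq : (Real.cos (2 * s) - 1) / s ^ 2 + Real.sin (2 * s) / (2 * s) + 1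
      = (4 * Real.cos (2 * s) - 4 + 2 * s * Real.sin (2 * s) + (2 * s) ^ 2) / (4 * s ^ 2) := by
    field_simp
    ring
  rw [heq]
  exact div_pos hkey (by positivity)
end

section
/- If n is an integer with n ≥ 6, then the function s ↦ (1 - cos(2s))/sⁿ - sin(2s)/(2s^(n-1)) - 1/s^(n-2) is strictly increasing on the open interval (0, ∞). -/
/-!
With `t = 2s`, the derivative of the function is `(n A(t) + B(t)) / (4 s^(n+1))`, where
`A(t) = t² + t sin t - 4(1 - cos t)` and `B(t) = 3t sin t - 2t² - t² cos t`. Both `A ≥ 0` and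
`6A + B > 0` hold for `t > 0`; for small `t` this follows from the alternating Taylor bounds of
`sin` and `cos` (whose remainders have a sign on `[0, ∞)`, by repeated integration from `0`), and
for large `t` from `|sin|, |cos| ≤ 1`. Hence `n A + B = (n - 6) A + (6A + B) > 0` for `n ≥ 6`.
-/

open Real Finset Nat

noncomputable def cosTaylor (k : ℕ) (x : ℝ) : ℝ :=
  ∑ j ∈ range k, (-1) ^ j * x ^ (2 * j) / (2 * j)!

noncomputable def sinTaylor (k : ℕ) (x : ℝ) : ℝ :=
  ∑ j ∈ range k, (-1) ^ j * x ^ (2 * j + 1) / (2 * j + 1)!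

lemma hasDerivAt_sinTaylor (k : ℕ) (x : ℝ) :
    HasDerivAt (sinTaylor k) (cosTaylor k x) x := by
  refine (HasDerivAt.fun_sum fun j _ ↦ ((hasDerivAt_pow (2 * j + 1) x).const_mul
    ((-1 : ℝ) ^ j)).div_const ((2 * j + 1)! : ℝ)).congr_deriv (sum_congr rfl fun j _ ↦ ?_)
  rw [Nat.factorial_succ, Nat.add_sub_cancel]
  push_cast
  field_simp

lemma hasDerivAt_cosTaylor_succ (k : ℕ) (x : ℝ) :
    HasDerivAt (cosTaylor (k + 1)) (-sinTaylor k x) x := by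
  have := HasDerivAt.fun_sum (u := range (k + 1)) fun j _ ↦
    ((hasDerivAt_pow (2 * j) x).const_mul ((-1 : ℝ) ^ j)).div_const ((2 * j)! : ℝ)
  refine this.congr_deriv ?_
  rw [sum_range_succ', sinTaylor, ← sum_neg_distrib]
  simp only [mul_zero, CharP.cast_eq_zero, zero_mul, zero_div, add_zero]
  refine sum_congr rfl fun j _ ↦ ?_
  rw [show 2 * (j + 1) = 2 * j + 1 + 1 by ring, Nat.add_sub_cancel, Nat.factorial_succ]
  push_cast
  field_simp
  ring

lemma nonneg_of_hasDerivAt_nonneg {F F' : ℝ → ℝ} (hF : ∀ x, HasDerivAt F (F' x) x)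
    (hF0 : F 0 = 0) (hF' : ∀ x, 0 ≤ x → 0 ≤ F' x) {x : ℝ} (hx : 0 ≤ x) : 0 ≤ F x := by
  have hmono : MonotoneOn F (Set.Ici 0) :=
    monotoneOn_of_hasDerivWithinAt_nonneg (convex_Ici 0)
      (fun y _ ↦ (hF y).continuousAt.continuousWithinAt)
      (fun y _ ↦ (hF y).hasDerivWithinAt)
      (fun y hy ↦ hF' y (interior_subset hy))
  simpa [hF0] using hmono Set.self_mem_Ici hx hx

lemma sin_remainder_nonneg {k : ℕ}
    (hcos : ∀ x, 0 ≤ x → 0 ≤ (-1) ^ k * (cos x - cosTaylor k x)) {x : ℝ} (hx : 0 ≤ x) :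
    0 ≤ (-1) ^ k * (sin x - sinTaylor k x) :=
  nonneg_of_hasDerivAt_nonneg
    (fun y ↦ ((hasDerivAt_sin y).sub (hasDerivAt_sinTaylor k y)).const_mul _)
    (by simp [sinTaylor]) hcos hx

lemma cos_remainder_nonneg {k : ℕ}
    (hsin : ∀ x, 0 ≤ x → 0 ≤ (-1) ^ k * (sin x - sinTaylor k x)) {x : ℝ} (hx : 0 ≤ x) :
    0 ≤ (-1) ^ (k + 1) * (cos x - cosTaylor (k + 1) x) :=
  nonneg_of_hasDerivAt_nonneg
    (fun y ↦ ((hasDerivAt_cos y).sub (hasDerivAt_cosTaylor_succ k y)).const_mul _)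
    (by simp [cosTaylor, sum_range_succ'])
    (fun y hy ↦ (hsin y hy).trans_eq (by ring)) hx

theorem cos_sin_remainder_nonneg (k : ℕ) {x : ℝ} (hx : 0 ≤ x) :
    0 ≤ (-1) ^ (k + 1) * (cos x - cosTaylor (k + 1) x) ∧
      0 ≤ (-1) ^ (k + 1) * (sin x - sinTaylor (k + 1) x) := by
  induction k generalizing x with
  | zero =>
    have hcos : ∀ y, 0 ≤ (-1) ^ 1 * (cos y - cosTaylor 1 y) := fun y ↦ by
      simpa [cosTaylor] using cos_le_one y
    exact ⟨hcos x, sin_remainder_nonneg (fun y _ ↦ hcos y) hx⟩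
  | succ k ih =>
    have hcos := fun y (hy : 0 ≤ y) ↦ cos_remainder_nonneg (fun z hz ↦ (ih hz).2) hy
    exact ⟨hcos x hx, sin_remainder_nonneg hcos hx⟩

lemma cosTaylor_le_cos {k : ℕ} (hk : 0 < k) {x : ℝ} (hx : 0 ≤ x) :
    cosTaylor (2 * k) x ≤ cos x := by
  obtain ⟨j, rfl⟩ : ∃ j, k = j + 1 := ⟨k - 1, by omega⟩
  have h := (cos_sin_remainder_nonneg (2 * j + 1) hx).1
  rw [show 2 * j + 1 + 1 = 2 * (j + 1) by ring, pow_mul] at h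
  simpa using h

lemma sinTaylor_le_sin {k : ℕ} (hk : 0 < k) {x : ℝ} (hx : 0 ≤ x) :
    sinTaylor (2 * k) x ≤ sin x := by
  obtain ⟨j, rfl⟩ : ∃ j, k = j + 1 := ⟨k - 1, by omega⟩
  have h := (cos_sin_remainder_nonneg (2 * j + 1) hx).2
  rw [show 2 * j + 1 + 1 = 2 * (j + 1) by ring, pow_mul] at h
  simpa using h

lemma four_mul_one_sub_cos_le {t : ℝ} (ht : 0 ≤ t) : 4 * (1 - cos t) ≤ t ^ 2 + t * sin t := by
  rcases le_or_gt (t ^ 2) 14 with ht14 | ht14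
  · have hs := sinTaylor_le_sin (k := 2) two_pos ht
    have hc := cosTaylor_le_cos (k := 2) two_pos ht
    norm_num [sinTaylor, cosTaylor, sum_range_succ, Nat.factorial] at hs hc
    -- with these Taylor polynomials in place of `sin`, `cos` the gap is `t⁶ (14 - t²) / 5040`
    nlinarith [mul_le_mul_of_nonneg_left hs ht, mul_nonneg (pow_nonneg ht 6) (sub_nonneg.2 ht14)]
  · nlinarith [neg_one_le_sin t, neg_one_le_cos t]

lemma twentyFour_mul_one_sub_cos_lt {t : ℝ} (ht : 0 < t) :
    24 * (1 - cos t) < 4 * t ^ 2 + 9 * t * sin t - t ^ 2 * cos t := by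
  rcases le_or_gt (t ^ 2) 24 with ht24 | ht24
  · have hs := sinTaylor_le_sin (k := 3) three_pos ht.le
    have hc := cosTaylor_le_cos (k := 3) three_pos ht.le
    norm_num [sinTaylor, cosTaylor, sum_range_succ, Nat.factorial] at hs hc
    -- with these Taylor polynomials in place of `sin`, `cos` the gap is
    -- `t⁸ (3960 - 132 t² + t⁴) / 19958400`
    have hq : 0 < 3960 - 132 * t ^ 2 + t ^ 4 := by nlinarith
    nlinarith [mul_le_mul_of_nonneg_left hs (by positivity : (0:ℝ) ≤ 9 * t),
      mul_le_mul_of_nonneg_left hc (sub_nonneg.2 ht24), mul_pos (pow_pos ht 8) hq]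
  · have ht3 : 3 < t := by nlinarith
    nlinarith [mul_le_mul_of_nonneg_left (neg_one_le_sin t) ht.le,
      mul_nonneg (sub_nonneg.2 ht24.le) (sub_nonneg.2 (cos_le_one t))]

lemma hasDerivAt_one_sub_cos_div_pow (n : ℕ) (hn : 2 ≤ n) {s : ℝ} (hs : s ≠ 0) :
    HasDerivAt
      (fun s : ℝ ↦ (1 - cos (2 * s)) / s ^ n - sin (2 * s) / (2 * s ^ (n - 1)) - 1 / s ^ (n - 2))
      (((n + 3) / 2 * s * sin (2 * s) - n * (1 - cos (2 * s)) + s ^ 2 * (n - 2 - cos (2 * s)))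
        / s ^ (n + 1)) s := by
  obtain ⟨m, rfl⟩ : ∃ m, n = m + 2 := ⟨n - 2, by omega⟩
  simp only [show m + 2 - 1 = m + 1 by omega, Nat.add_sub_cancel]
  have hlin : HasDerivAt (fun y : ℝ ↦ 2 * y) 2 s := by
    simpa using (hasDerivAt_id s).const_mul (2 : ℝ)
  have h₁ := (hlin.cos.const_sub 1).div (hasDerivAt_pow (m + 2) s) (pow_ne_zero _ hs)
  have h₂ := hlin.sin.div ((hasDerivAt_pow (m + 1) s).const_mul 2)
    (mul_ne_zero two_ne_zero (pow_ne_zero _ hs))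
  have h₃ := (hasDerivAt_const s (1 : ℝ)).div (hasDerivAt_pow m s) (pow_ne_zero _ hs)
  refine ((h₁.sub h₂).sub h₃).congr_deriv ?_
  rcases m with _ | m
  · field_simp
    ring
  · simp only [Nat.add_sub_cancel, show m + 1 + 2 - 1 = m + 2 by omega]
    field_simp
    push_cast
    ring

-- Four times the left-hand side is `n A(2s) + B(2s)` in the notation of the header.
lemma deriv_numerator_pos {n : ℝ} (hn : 6 ≤ n) {s : ℝ} (hs : 0 < s) :
    0 < (n + 3) / 2 * s * sin (2 * s) - n * (1 - cos (2 * s)) + s ^ 2 * (n - 2 - cos (2 * s)) := by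
  have hA := four_mul_one_sub_cos_le (t := 2 * s) (by positivity)
  have hH := twentyFour_mul_one_sub_cos_lt (t := 2 * s) (by positivity)
  nlinarith [mul_nonneg (sub_nonneg.2 hn) (sub_nonneg.2 hA)]

theorem stmt_2 (n : ℕ) (hn : 6 ≤ n) :
    StrictMonoOn
      (fun s : ℝ =>
        (1 - Real.cos (2 * s)) / s ^ n - Real.sin (2 * s) / (2 * s ^ (n - 1)) -
          1 / s ^ (n - 2))
      (Set.Ioi 0) := by
  have hderiv (s : ℝ) (hs : s ∈ Set.Ioi 0) :=
    hasDerivAt_one_sub_cos_div_pow n (by omega) (ne_of_gt hs)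
  refine strictMonoOn_of_deriv_pos (convex_Ioi 0)
    (fun s hs ↦ (hderiv s hs).continuousAt.continuousWithinAt) fun s hs ↦ ?_
  rw [interior_Ioi] at hs
  rw [(hderiv s hs).deriv]
  exact div_pos (deriv_numerator_pos (by exact_mod_cast hn) hs) (pow_pos hs _)
end

section
/- The function s ↦ (1 - cos(2s))/s⁵ - sin(2s)/(2s⁴) - 1/s³ is strictly increasing on the open interval (4, ∞). -/
/-!
Differentiating, `F' x = N x / x ^ 6` with
`N x = x ^ 2 (3 - cos 2x) + 4 x sin 2x + 5 cos 2x - 5`. Bounding `cos 2x ≤ 1`, `sin 2x ≥ -1` and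
`cos 2x ≥ -1` term by term gives `N x ≥ 2 x ^ 2 - 4 x - 10 = 2 ((x - 1) ^ 2 - 6)`, which is positive
for `x > 1 + √6`, and `1 + √6 < 4`.
-/

open Real Set

noncomputable def F (s : ℝ) : ℝ :=
  (1 - cos (2 * s)) / s ^ 5 - sin (2 * s) / (2 * s ^ 4) - 1 / s ^ 3

theorem hasDerivAt_F {x : ℝ} (hx : x ≠ 0) :
    HasDerivAt F
      ((x ^ 2 * (3 - cos (2 * x)) + 4 * x * sin (2 * x) + 5 * cos (2 * x) - 5) / x ^ 6) x := by
  have h2x : HasDerivAt (fun s : ℝ => 2 * s) 2 x := by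
    simpa using (hasDerivAt_id x).const_mul 2
  have hcos := (hasDerivAt_cos (2 * x)).comp x h2x
  have hsin := (hasDerivAt_sin (2 * x)).comp x h2x
  have h1 := ((hasDerivAt_const x 1).sub hcos).div (hasDerivAt_pow 5 x) (pow_ne_zero 5 hx)
  have h2 := hsin.div ((hasDerivAt_pow 4 x).const_mul 2) (by positivity)
  have h3 := (hasDerivAt_const x 1).div (hasDerivAt_pow 3 x) (pow_ne_zero 3 hx)
  refine ((h1.sub h2).sub h3).congr_deriv ?_
  simp only [Pi.sub_apply, Function.comp_apply]
  field_simp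
  ring

theorem F_deriv_numerator_pos {x : ℝ} (hx : 1 + √6 < x) :
    0 < x ^ 2 * (3 - cos (2 * x)) + 4 * x * sin (2 * x) + 5 * cos (2 * x) - 5 := by
  have hsqrt : (√6) ^ 2 = 6 := sq_sqrt (by norm_num)
  have hquad : 6 < (x - 1) ^ 2 := by nlinarith [sqrt_nonneg 6]
  have hx0 : 0 ≤ x := by linarith [sqrt_nonneg 6]
  nlinarith [mul_nonneg (sq_nonneg x) (sub_nonneg.2 (cos_le_one (2 * x))),
    mul_nonneg hx0 (neg_le_iff_add_nonneg.1 (neg_one_le_sin (2 * x))), neg_one_le_cos (2 * x)]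

theorem strictMonoOn_F : StrictMonoOn F (Ioi (1 + √6)) := by
  have hpos : ∀ x ∈ Ioi (1 + √6), 0 < x := fun x hx =>
    (add_pos_of_pos_of_nonneg one_pos (sqrt_nonneg 6)).trans hx
  have hderiv : ∀ x ∈ Ioi (1 + √6), HasDerivAt F _ x := fun x hx =>
    hasDerivAt_F (hpos x hx).ne'
  refine strictMonoOn_of_hasDerivWithinAt_pos (convex_Ioi _)
    (fun x hx => (hderiv x hx).continuousAt.continuousWithinAt)
    (fun x hx => (hderiv x (interior_subset hx)).hasDerivWithinAt) fun x hx => ?_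
  rw [interior_Ioi] at hx
  exact div_pos (F_deriv_numerator_pos hx) (pow_pos (hpos x hx) 6)

theorem stmt_3 :
    StrictMonoOn
      (fun s : ℝ =>
        (1 - Real.cos (2 * s)) / s ^ 5 - Real.sin (2 * s) / (2 * s ^ 4) - 1 / s ^ 3)
      (Set.Ioi 4) := by
  have hsqrt : √6 < 3 := (sqrt_lt' (by norm_num)).2 (by norm_num)
  exact strictMonoOn_F.mono (Ioi_subset_Ioi (by linarith))
end

section
/- The integral from 0 to 2π of (2 sin⁵(s)/s⁵ - cos(s) sin⁴(s)/s⁴ - sin³(s)/s³) ds is negative. -/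
/-!
With `q s = s² + s sin s cos s - 2 sin² s` (`numerator` below) the integrand is
`-sin³ s · q s / s⁵`. On `[0, π]`, `q'' = 4 sin s (sin s - s cos s) ≥ 0` gives `q ≥ 0`, and
`s q' - 3 q = 2 sin s (3 sin s - 3 s cos s - s² sin s) ≥ 0` makes `q / s³` increasing, so on
`[a, b]` the integrand is at most `-(q a / (a³ b²)) sin³ s`. On `[π, 2π]`, `q ≤ s² + s / 2`
bounds it by `(1 / a³ + 1 / (2 a⁴)) |sin s|³`. Integrating `sin³` exactly over pieces cut at
multiples of `π / 3` and `π / 2`, where `cos` is rational, the integral over `[0, π]` is at most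
`-0.025` and the one over `[π, 2π]` at most `0.0213`.
-/

open Real Set intervalIntegral

namespace SincIntegral

noncomputable def integrand (s : ℝ) : ℝ :=
  2 * sinc s ^ 5 - cos s * sinc s ^ 4 - sinc s ^ 3

noncomputable def numerator (s : ℝ) : ℝ :=
  s ^ 2 + s * sin s * cos s - 2 * sin s ^ 2

lemma integrand_eq_div :
    (fun s => 2 * sin s ^ 5 / s ^ 5 - cos s * sin s ^ 4 / s ^ 4 - sin s ^ 3 / s ^ 3) =
      integrand := by
  funext s
  rcases eq_or_ne s 0 with rfl | hs
  · norm_num [integrand]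
  · simp only [integrand, sinc_of_ne_zero hs]
    ring

lemma integrand_eq_mul_numerator (s : ℝ) :
    integrand s = -sin s ^ 3 * (numerator s / s ^ 5) := by
  rcases eq_or_ne s 0 with rfl | hs
  · norm_num [integrand]
  · rw [integrand, sinc_of_ne_zero hs, numerator]
    field_simp
    ring

lemma continuous_integrand : Continuous integrand := by
  unfold integrand; fun_prop

lemma nonneg_of_hasDerivAt {f f' : ℝ → ℝ} {b x : ℝ} (hf : ∀ y, HasDerivAt f (f' y) y)
    (hf' : ∀ y ∈ Ioo 0 b, 0 ≤ f' y) (h0 : f 0 = 0) (hx : x ∈ Icc 0 b) : 0 ≤ f x := by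
  have hmono : MonotoneOn f (Icc 0 b) :=
    monotoneOn_of_hasDerivWithinAt_nonneg (convex_Icc 0 b)
      (fun y _ => (hf y).continuousAt.continuousWithinAt)
      (fun y _ => (hf y).hasDerivWithinAt) (by rwa [interior_Icc])
  simpa [h0] using hmono ⟨le_rfl, hx.1.trans hx.2⟩ hx hx.1

lemma mul_cos_le_sin {x : ℝ} (hx : x ∈ Icc 0 π) : x * cos x ≤ sin x := by
  have h := nonneg_of_hasDerivAt (f := fun y => sin y - y * cos y) (f' := fun y => y * sin y)
    (fun y => ((hasDerivAt_sin y).sub ((hasDerivAt_id y).mul (hasDerivAt_cos y))).congr_deriv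
      (by simp only [id]; ring))
    (fun y hy => mul_nonneg hy.1.le (sin_nonneg_of_nonneg_of_le_pi hy.1.le hy.2.le))
    (by simp) hx
  linarith

lemma hasDerivAt_numerator (y : ℝ) :
    HasDerivAt numerator (3 * y - 2 * y * sin y ^ 2 - 3 * sin y * cos y) y :=
  ((((hasDerivAt_id y).pow 2).add (((hasDerivAt_id y).mul (hasDerivAt_sin y)).mul
    (hasDerivAt_cos y))).sub (((hasDerivAt_sin y).pow 2).const_mul 2)).congr_deriv (by
      simp only [id, Pi.mul_apply]
      linear_combination y * sin_sq_add_cos_sq y)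

lemma numerator_nonneg {x : ℝ} (hx : x ∈ Icc 0 π) : 0 ≤ numerator x := by
  refine nonneg_of_hasDerivAt hasDerivAt_numerator (fun y hy => ?_) (by simp [numerator]) hx
  exact nonneg_of_hasDerivAt (f := fun y => 3 * y - 2 * y * sin y ^ 2 - 3 * sin y * cos y)
    (f' := fun y => 4 * sin y * (sin y - y * cos y))
    (fun y => ((((hasDerivAt_id y).const_mul 3).sub
        (((hasDerivAt_id y).const_mul 2).mul ((hasDerivAt_sin y).pow 2))).sub
        (((hasDerivAt_sin y).const_mul 3).mul (hasDerivAt_cos y))).congr_deriv (by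
          simp only [id, Pi.pow_apply]
          linear_combination -3 * sin_sq_add_cos_sq y))
    (fun y hy => mul_nonneg (mul_nonneg zero_le_four
      (sin_nonneg_of_nonneg_of_le_pi hy.1.le hy.2.le))
      (sub_nonneg.2 (mul_cos_le_sin (Ioo_subset_Icc_self hy))))
    (by simp) (Ioo_subset_Icc_self hy)

lemma monotoneOn_numerator_div_pow_three :
    MonotoneOn (fun x => numerator x / x ^ 3) (Ioc 0 π) := by
  have hk : ∀ y ∈ Icc 0 π, 0 ≤ 3 * sin y - 3 * y * cos y - y ^ 2 * sin y := fun y hy =>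
    nonneg_of_hasDerivAt (f := fun y => 3 * sin y - 3 * y * cos y - y ^ 2 * sin y)
      (f' := fun y => y * (sin y - y * cos y))
      (fun y => ((((hasDerivAt_sin y).const_mul 3).sub (((hasDerivAt_id y).const_mul 3).mul
        (hasDerivAt_cos y))).sub (((hasDerivAt_id y).pow 2).mul (hasDerivAt_sin y))).congr_deriv
          (by simp only [id, Pi.pow_apply]; ring))
      (fun y hy => mul_nonneg hy.1.le (sub_nonneg.2 (mul_cos_le_sin (Ioo_subset_Icc_self hy))))
      (by simp) hy
  refine monotoneOn_of_hasDerivWithinAt_nonneg (convex_Ioc 0 π)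
    (fun y hy => ((hasDerivAt_numerator y).continuousAt.div (continuousAt_id.pow 3)
      (pow_ne_zero 3 hy.1.ne')).continuousWithinAt)
    (fun y hy => ((hasDerivAt_numerator y).div ((hasDerivAt_id y).pow 3)
      (pow_ne_zero 3 (interior_subset hy).1.ne')).hasDerivWithinAt) (fun y hy => ?_)
  rw [interior_Ioc] at hy
  refine div_nonneg ?_ (sq_nonneg _)
  have := mul_nonneg (mul_nonneg (sq_nonneg y) (sin_nonneg_of_nonneg_of_le_pi hy.1.le hy.2.le))
    (hk y (Ioo_subset_Icc_self hy))
  simp only [id, Pi.pow_apply, numerator]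
  push_cast
  linear_combination 2 * this

lemma integrand_nonpos {s : ℝ} (hs : s ∈ Icc 0 π) : integrand s ≤ 0 := by
  rw [integrand_eq_mul_numerator, neg_mul]
  exact neg_nonpos.2 (mul_nonneg (pow_nonneg (sin_nonneg_of_nonneg_of_le_pi hs.1 hs.2) 3)
    (div_nonneg (numerator_nonneg hs) (pow_nonneg hs.1 5)))

lemma integrand_le_of_mem_Icc {a b c s : ℝ} (ha : 0 < a) (hb : b ≤ π)
    (hc : c ≤ numerator a / a ^ 3 / b ^ 2) (hs : s ∈ Icc a b) :
    integrand s ≤ -c * sin s ^ 3 := by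
  have hs0 : 0 < s := ha.trans_le hs.1
  have hsπ : s ≤ π := hs.2.trans hb
  have hc' : c ≤ numerator s / s ^ 5 := calc
    c ≤ numerator a / a ^ 3 / b ^ 2 := hc
    _ ≤ numerator a / a ^ 3 / s ^ 2 :=
      div_le_div_of_nonneg_left (div_nonneg (numerator_nonneg ⟨ha.le, hs.1.trans hsπ⟩)
        (pow_nonneg ha.le 3)) (by positivity) (pow_le_pow_left₀ hs0.le hs.2 2)
    _ ≤ numerator s / s ^ 3 / s ^ 2 := div_le_div_of_nonneg_right
      (monotoneOn_numerator_div_pow_three ⟨ha, hs.1.trans hsπ⟩ ⟨hs0, hsπ⟩ hs.1) (sq_nonneg s)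
    _ = numerator s / s ^ 5 := by rw [div_div, ← pow_add]
  rw [integrand_eq_mul_numerator, neg_mul, neg_mul, neg_le_neg_iff, mul_comm]
  exact mul_le_mul_of_nonneg_left hc'
    (pow_nonneg (sin_nonneg_of_nonneg_of_le_pi hs0.le hsπ) 3)

lemma integrand_le_of_pi_le {a₀ s : ℝ} (ha₀ : 0 < a₀) (ha₀s : a₀ ≤ s) (hπs : π ≤ s)
    (hs : s ≤ 2 * π) : integrand s ≤ -(1 / a₀ ^ 3 + 1 / (2 * a₀ ^ 4)) * sin s ^ 3 := by
  have hs0 : 0 < s := ha₀.trans_le ha₀s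
  have hsin : sin s ≤ 0 := by
    rw [← sin_sub_two_pi]
    exact sin_nonpos_of_nonpos_of_neg_pi_le (by linarith) (by linarith)
  have hnum : numerator s ≤ s ^ 2 + s / 2 := by
    have := sin_sq_add_cos_sq s
    unfold numerator
    nlinarith [mul_nonneg hs0.le (sq_nonneg (sin s - cos s)), sq_nonneg (sin s)]
  have hd : numerator s / s ^ 5 ≤ 1 / a₀ ^ 3 + 1 / (2 * a₀ ^ 4) := calc
    numerator s / s ^ 5 ≤ (s ^ 2 + s / 2) / s ^ 5 := by gcongr
    _ = 1 / s ^ 3 + 1 / (2 * s ^ 4) := by field_simp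
    _ ≤ 1 / a₀ ^ 3 + 1 / (2 * a₀ ^ 4) := by gcongr
  have hsin3 : 0 ≤ -sin s ^ 3 := by nlinarith [sq_nonneg (sin s)]
  rw [integrand_eq_mul_numerator]
  linarith [mul_le_mul_of_nonneg_left hd hsin3]

lemma integral_integrand_le {a b c : ℝ} (hab : a ≤ b)
    (h : ∀ s ∈ Icc a b, integrand s ≤ c * sin s ^ 3) :
    ∫ s in a..b, integrand s ≤ c * (cos a - cos b - (cos a ^ 3 - cos b ^ 3) / 3) := by
  rw [← integral_sin_pow_three, ← integral_const_mul]
  exact integral_mono_on hab (continuous_integrand.intervalIntegrable _ _)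
    (by apply Continuous.intervalIntegrable; fun_prop) h

lemma integral_integrand_add_adjacent (a b c : ℝ) :
    (∫ s in a..b, integrand s) + ∫ s in b..c, integrand s = ∫ s in a..c, integrand s :=
  integral_add_adjacent_intervals (continuous_integrand.intervalIntegrable _ _)
    (continuous_integrand.intervalIntegrable _ _)

lemma numerator_div_ge_of_pi_div_three :
    (0.0174 : ℝ) ≤ numerator (π / 3) / (π / 3) ^ 3 / (π / 2) ^ 2 := by
  have h3 : (1.732 : ℝ) < √3 := by rw [lt_sqrt (by norm_num)]; norm_num
  have h3sq : √3 ^ 2 = 3 := sq_sqrt (by norm_num)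
  have hπ := pi_gt_d6
  have hπ' := pi_lt_d6
  rw [numerator, sin_pi_div_three, cos_pi_div_three, div_div, le_div_iff₀ (by positivity)]
  have hπ5 := pow_le_pow_left₀ pi_pos.le hπ'.le 5
  nlinarith

lemma numerator_div_ge_of_pi_div_two :
    (0.0274 : ℝ) ≤ numerator (π / 2) / (π / 2) ^ 3 / (2 * π / 3) ^ 2 := by
  have hπ := pi_gt_d6
  have hπ' := pi_lt_d6
  rw [numerator, sin_pi_div_two, cos_pi_div_two, div_div, le_div_iff₀ (by positivity)]
  have hπ5 := pow_le_pow_left₀ pi_pos.le hπ'.le 5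
  nlinarith

lemma sin_two_pi_div_three : sin (2 * π / 3) = √3 / 2 := by
  rw [show 2 * π / 3 = π - π / 3 by ring, sin_pi_sub, sin_pi_div_three]

lemma cos_two_pi_div_three : cos (2 * π / 3) = -(1 / 2) := by
  rw [show 2 * π / 3 = π - π / 3 by ring, cos_pi_sub, cos_pi_div_three]

lemma numerator_div_ge_of_two_pi_div_three :
    (0.0218 : ℝ) ≤ numerator (2 * π / 3) / (2 * π / 3) ^ 3 / π ^ 2 := by
  have h3 : √3 < (1.7321 : ℝ) := by rw [sqrt_lt' (by norm_num)]; norm_num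
  have h3sq : √3 ^ 2 = 3 := sq_sqrt (by norm_num)
  have hπ := pi_gt_d6
  have hπ' := pi_lt_d6
  rw [numerator, sin_two_pi_div_three, cos_two_pi_div_three, div_div, le_div_iff₀ (by positivity)]
  have hπ5 := pow_le_pow_left₀ pi_pos.le hπ'.le 5
  nlinarith

lemma integral_integrand_le_of_le_pi {a b c : ℝ} (ha : 0 < a) (hab : a ≤ b) (hb : b ≤ π)
    (hc : c ≤ numerator a / a ^ 3 / b ^ 2) :
    ∫ s in a..b, integrand s ≤ -c * (cos a - cos b - (cos a ^ 3 - cos b ^ 3) / 3) :=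
  integral_integrand_le hab fun _ => integrand_le_of_mem_Icc ha hb hc

lemma integral_integrand_le_of_pi_le {a₀ a b : ℝ} (ha₀ : 0 < a₀) (ha₀a : a₀ ≤ a) (ha : π ≤ a)
    (hab : a ≤ b) (hb : b ≤ 2 * π) :
    ∫ s in a..b, integrand s ≤
      -(1 / a₀ ^ 3 + 1 / (2 * a₀ ^ 4)) * (cos a - cos b - (cos a ^ 3 - cos b ^ 3) / 3) :=
  integral_integrand_le hab fun _ hs =>
    integrand_le_of_pi_le ha₀ (ha₀a.trans hs.1) (ha.trans hs.1) (hs.2.trans hb)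

lemma integral_integrand_zero_pi_le : ∫ s in (0 : ℝ)..π, integrand s ≤ -0.025 := by
  have hπ := pi_gt_d6
  have h₀ : ∫ s in (0 : ℝ)..π / 3, integrand s ≤ 0 := by
    simpa using integral_integrand_le (c := 0) (by positivity) fun s hs => by
      simpa using integrand_nonpos ⟨hs.1, by linarith [hs.2]⟩
  have h₁ := integral_integrand_le_of_le_pi (by positivity) (by linarith) (by linarith)
    numerator_div_ge_of_pi_div_three
  have h₂ := integral_integrand_le_of_le_pi (by positivity) (by linarith) (by linarith)
    numerator_div_ge_of_pi_div_two
  have h₃ := integral_integrand_le_of_le_pi (by positivity) (by linarith) le_rfl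
    numerator_div_ge_of_two_pi_div_three
  simp only [cos_pi_div_three, cos_pi_div_two, cos_two_pi_div_three, cos_pi] at h₁ h₂ h₃
  rw [← integral_integrand_add_adjacent 0 (π / 3),
    ← integral_integrand_add_adjacent (π / 3) (π / 2),
    ← integral_integrand_add_adjacent (π / 2) (2 * π / 3)]
  norm_num at h₁ h₂ h₃
  linarith

lemma integral_integrand_pi_two_pi_le : ∫ s in π..2 * π, integrand s ≤ 0.0213 := by
  have hπ := pi_gt_d6
  have h₁ := integral_integrand_le_of_pi_le (a₀ := 3.14159) (a := π) (b := π / 3 + π)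
    (by norm_num) (by linarith) le_rfl (by linarith) (by linarith)
  have h₂ := integral_integrand_le_of_pi_le (a₀ := 4.1887) (a := π / 3 + π) (b := π / 2 + π)
    (by norm_num) (by linarith) (by linarith) (by linarith) (by linarith)
  have h₃ := integral_integrand_le_of_pi_le (a₀ := 4.7123) (a := π / 2 + π)
    (b := 2 * π / 3 + π) (by norm_num) (by linarith) (by linarith) (by linarith) (by linarith)
  have h₄ := integral_integrand_le_of_pi_le (a₀ := 5.2359) (a := 2 * π / 3 + π) (b := 2 * π)
    (by norm_num) (by linarith) (by linarith) (by linarith) le_rfl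
  simp only [cos_add_pi, cos_pi_div_three, cos_pi_div_two, cos_two_pi_div_three, cos_pi,
    cos_two_pi] at h₁ h₂ h₃ h₄
  rw [← integral_integrand_add_adjacent π (π / 3 + π),
    ← integral_integrand_add_adjacent (π / 3 + π) (π / 2 + π),
    ← integral_integrand_add_adjacent (π / 2 + π) (2 * π / 3 + π)]
  norm_num at h₁ h₂ h₃ h₄
  linarith

end SincIntegral

open Real in
theorem stmt_4 :
    ∫ s in (0:ℝ)..(2 * π),
      (2 * sin s ^ 5 / s ^ 5 - cos s * sin s ^ 4 / s ^ 4 - sin s ^ 3 / s ^ 3) < 0 := by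
  rw [SincIntegral.integrand_eq_div, ← SincIntegral.integral_integrand_add_adjacent 0 π]
  linarith [SincIntegral.integral_integrand_zero_pi_le,
    SincIntegral.integral_integrand_pi_two_pi_le]
end

section
/- If n ≥ 3 is an odd integer and i is a nonnegative even integer, then the sum of the integrals of sinⁿ(s)/s^(n-2) over [iπ, (i+1)π] and over [(i+1)π, (i+2)π] is positive. -/
/-!
Shifting the second integral by `π` turns it into `-∫ sin t ^ n / (t + π) ^ (n - 2)` over the
first interval, because `n` is odd. On that interval `sin` is positive since `i` is even, so the
sum is the integral of `sin t ^ n * (t ^ -(n - 2) - (t + π) ^ -(n - 2)) > 0`.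
Since `|sin s| ≤ |s|`, the integrand is bounded by `1`, so it is integrable even across `s = 0`.
-/

open Real MeasureTheory intervalIntegral Set

lemma abs_sin_pow_div_pow_le_one {m n : ℕ} (hmn : m ≤ n) (x : ℝ) :
    |sin x ^ n / x ^ m| ≤ 1 := by
  rw [abs_div, abs_pow, abs_pow]
  refine div_le_one_of_le₀ ?_ (by positivity)
  calc |sin x| ^ n ≤ |sin x| ^ m := pow_le_pow_of_le_one (abs_nonneg _) (abs_sin_le_one x) hmn
    _ ≤ |x| ^ m := pow_le_pow_left₀ (abs_nonneg _) abs_sin_le_abs m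

lemma intervalIntegrable_sin_pow_div_pow {m n : ℕ} (hmn : m ≤ n) (a b : ℝ) :
    IntervalIntegrable (fun s => sin s ^ n / s ^ m) volume a b :=
  (intervalIntegrable_const (c := (1 : ℝ))).mono_fun'
    ((measurable_sin.pow_const n).div (measurable_id.pow_const m)).aestronglyMeasurable
    (Filter.Eventually.of_forall fun x => abs_sin_pow_div_pow_le_one hmn x)

lemma sin_pos_of_mem_Ioo_even_mul_pi {i : ℕ} (hi : Even i) {x : ℝ}
    (hx : x ∈ Ioo (i * π) (i * π + π)) : 0 < sin x := by
  obtain ⟨k, rfl⟩ := hi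
  rw [← sin_sub_nat_mul_two_pi x k]
  push_cast at hx
  exact sin_pos_of_pos_of_lt_pi (by linarith [hx.1]) (by linarith [hx.2])

lemma sin_add_pi_pow_div_of_odd {n : ℕ} (hn : Odd n) (m : ℕ) (s : ℝ) :
    sin (s + π) ^ n / (s + π) ^ m = -(sin s ^ n / (s + π) ^ m) := by
  rw [sin_add_pi, hn.neg_pow, neg_div]

theorem integral_sin_pow_div_pow_add_integral_pos {m n : ℕ} (hmn : m ≤ n) (hm : 0 < m)
    (hn : Odd n) {a : ℝ} (ha : 0 ≤ a) (hsin : ∀ x ∈ Ioo a (a + π), 0 < sin x) :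
    0 < (∫ s in a..a + π, sin s ^ n / s ^ m) + ∫ s in a + π..a + π + π, sin s ^ n / s ^ m := by
  have hf := intervalIntegrable_sin_pow_div_pow hmn a (a + π)
  have hg : IntervalIntegrable (fun s => sin s ^ n / (s + π) ^ m) volume a (a + π) := by
    have := ((IntervalIntegrable.comp_add_right_iff (c := π)).2
      (intervalIntegrable_sin_pow_div_pow hmn (a + π) (a + π + π))).neg
    simpa only [sin_add_pi_pow_div_of_odd hn, Pi.neg_def, neg_neg] using this
  have hshift : ∫ s in a + π..a + π + π, sin s ^ n / s ^ m
      = -∫ s in a..a + π, sin s ^ n / (s + π) ^ m := by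
    rw [← integral_comp_add_right (fun s => sin s ^ n / s ^ m), ← intervalIntegral.integral_neg]
    simp only [sin_add_pi_pow_div_of_odd hn]
  rw [hshift, ← sub_eq_add_neg, ← integral_sub hf hg]
  refine intervalIntegral_pos_of_pos_on (hf.sub hg) (fun x hx => ?_) (by linarith [pi_pos])
  have hx0 : 0 < x := ha.trans_lt hx.1
  have hpow : x ^ m < (x + π) ^ m := pow_lt_pow_left₀ (by linarith [pi_pos]) hx0.le hm.ne'
  exact sub_pos.2 (div_lt_div_of_pos_left (pow_pos (hsin x hx) n) (by positivity) hpow)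

open Real in
theorem stmt_7 (n : ℕ) (hn : 3 ≤ n) (hodd : Odd n) (i : ℕ) (hi : Even i) :
    0 < (∫ s in (i * π)..((i + 1) * π), sin s ^ n / s ^ (n - 2)) +
        ∫ s in ((i + 1) * π)..((i + 2) * π), sin s ^ n / s ^ (n - 2) := by
  have h := integral_sin_pow_div_pow_add_integral_pos (m := n - 2) (by omega) (by omega) hodd
    (by positivity : (0 : ℝ) ≤ i * π) fun x hx => sin_pos_of_mem_Ioo_even_mul_pi hi hx
  convert h using 3 <;> ring
end

section
/- Let n ≥ 4 be an integer and define p_{i,n}(z) = i(n-i)/(n-1) - (n/2 - i)(z-i)/(n-2) + 2n(z-i)²/((n-1)(n-2)). If 0 < z < min{(n-1)/4, n^(1/(n-3))/(n^(1/(n-3)) - 1)}, then the sum over i from 0 to ⌊z⌋ of (-1)^i · C(n,i) · (z-i)^(n-3) · p_{i,n}(z) is negative. -/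
/-!
Write `n = m + 2` and `t(x) = max x 0 ^ (n - 3)`. Multiplied by `2 (n - 1)² (n - 2)`, the
polynomial `p_{i,n}(z)` becomes `a (n - i)(n - i - 1) + b i (n - i) + c i (i - 1)` with
`a, b, c` quadratic in `z`, and these three factors turn `C(n, i)` into `n (n - 1)` times
`C(m, i)`, `C(m, i - 1)`, `C(m, i - 2)`. So the sum is a positive multiple of
`a F(z) - b F(z - 1) + c F(z - 2)` with `F(w) = ∑ⱼ (-1)ʲ C(m, j) t(w - j)`.
The bound on `z` involving `n ^ (1 / (n - 3))` says `n t(z - 1) < t(z)`; it makes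
`j ↦ C(m, j) t(w - j)` decreasing for `w ≤ z`, so that `t(w) - m t(w - 1) ≤ F(w) ≤ t(w)`.
Since `a < 0 < b, c` (this is where `4 z < n - 1` enters) and `t(z - 2) t(z) ≤ t(z - 1)²`,
these bounds reduce the claim to the negativity of a convex quadratic in `t(z - 1) / t(z)`
on `[0, 1 / n)`.
-/

open Finset Filter Topology

noncomputable def truncPow (e : ℕ) (x : ℝ) : ℝ := max x 0 ^ e

lemma truncPow_nonneg (e : ℕ) (x : ℝ) : 0 ≤ truncPow e x :=
  pow_nonneg (le_max_right _ _) _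

lemma truncPow_of_nonneg (e : ℕ) {x : ℝ} (hx : 0 ≤ x) : truncPow e x = x ^ e := by
  rw [truncPow, max_eq_left hx]

lemma truncPow_of_nonpos {e : ℕ} (he : e ≠ 0) {x : ℝ} (hx : x ≤ 0) : truncPow e x = 0 := by
  rw [truncPow, max_eq_right hx, zero_pow he]

lemma truncPow_sub_one_mul_le (e : ℕ) {u z : ℝ} (huz : u ≤ z) :
    truncPow e (u - 1) * truncPow e z ≤ truncPow e u * truncPow e (z - 1) := by
  simp only [truncPow, ← mul_pow]
  refine pow_le_pow_left₀ (by positivity) ?_ e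
  rcases le_or_gt u 1 with hu | hu
  · rw [max_eq_right (by linarith : u - 1 ≤ 0), zero_mul]
    positivity
  · rw [max_eq_left (by linarith : 0 ≤ u - 1), max_eq_left (by linarith : 0 ≤ z),
      max_eq_left (by linarith : 0 ≤ u), max_eq_left (by linarith : 0 ≤ z - 1)]
    nlinarith

lemma natCast_mul_truncPow_sub_one_le {k e : ℕ} {u z : ℝ} (hz : 0 < z) (huz : u ≤ z)
    (hkz : k * truncPow e (z - 1) ≤ truncPow e z) : k * truncPow e (u - 1) ≤ truncPow e u := by
  have hz' : 0 < truncPow e z := by rw [truncPow_of_nonneg e hz.le]; positivity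
  refine le_of_mul_le_mul_right ?_ hz'
  calc k * truncPow e (u - 1) * truncPow e z
      ≤ k * (truncPow e u * truncPow e (z - 1)) := by
        rw [mul_assoc]
        exact mul_le_mul_of_nonneg_left (truncPow_sub_one_mul_le e huz) k.cast_nonneg
    _ = truncPow e u * (k * truncPow e (z - 1)) := by ring
    _ ≤ truncPow e u * truncPow e z := by gcongr; exact truncPow_nonneg e u

lemma choose_succ_le_mul_choose (k j : ℕ) : k.choose (j + 1) ≤ k * k.choose j :=
  calc k.choose (j + 1) ≤ k.choose (j + 1) * (j + 1) := Nat.le_mul_of_pos_right _ j.succ_pos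
    _ = k.choose j * (k - j) := Nat.choose_succ_right_eq k j
    _ ≤ k.choose j * k := Nat.mul_le_mul_left _ (Nat.sub_le k j)
    _ = k * k.choose j := Nat.mul_comm _ _

lemma antitone_choose_mul_truncPow {k e : ℕ} {w z : ℝ} (hz : 0 < z) (hwz : w ≤ z)
    (hkz : k * truncPow e (z - 1) ≤ truncPow e z) :
    Antitone fun j : ℕ => (k.choose j : ℝ) * truncPow e (w - j) := by
  refine antitone_nat_of_succ_le fun j => ?_
  have hj : w - j ≤ z := by linarith [j.cast_nonneg (α := ℝ)]
  calc (k.choose (j + 1) : ℝ) * truncPow e (w - ↑(j + 1))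
      ≤ (k * k.choose j) * truncPow e (w - j - 1) := by
        rw [Nat.cast_succ, ← sub_sub]
        gcongr
        · exact truncPow_nonneg e _
        · exact_mod_cast choose_succ_le_mul_choose k j
    _ = k.choose j * (k * truncPow e (w - j - 1)) := by ring
    _ ≤ k.choose j * truncPow e (w - j) := by
        gcongr; exact natCast_mul_truncPow_sub_one_le hz hj hkz

lemma sum_range_neg_one_pow_mul_choose_of_le {m M : ℕ} (hM : m + 1 ≤ M) (g : ℕ → ℝ) :
    ∑ j ∈ range M, (-1) ^ j * (m.choose j * g j)
      = ∑ j ∈ range (m + 1), (-1) ^ j * (m.choose j * g j) := by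
  refine (sum_subset (range_subset_range.2 hM) fun j _ hj => ?_).symm
  rw [Nat.choose_eq_zero_of_lt (by simpa using hj)]
  simp

-- `e! * altChooseSum (e + 1) e w` is the Irwin–Hall density: that of the sum of `e + 1`
-- independent uniform variables on `[0, 1]`.
noncomputable def altChooseSum (k e : ℕ) (w : ℝ) : ℝ :=
  ∑ j ∈ range (k + 1), (-1) ^ j * (k.choose j * truncPow e (w - j))

lemma tendsto_altChooseSum (k e : ℕ) (w : ℝ) :
    Tendsto (fun M => ∑ j ∈ range M, (-1) ^ j * (k.choose j * truncPow e (w - j))) atTop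
      (𝓝 (altChooseSum k e w)) :=
  tendsto_atTop_of_eventually_const fun _ hM => sum_range_neg_one_pow_mul_choose_of_le hM _

section Bounds

variable {k e : ℕ} {w z : ℝ}

lemma altChooseSum_nonneg (hz : 0 < z) (hwz : w ≤ z)
    (hkz : k * truncPow e (z - 1) ≤ truncPow e z) : 0 ≤ altChooseSum k e w := by
  simpa using (antitone_choose_mul_truncPow hz hwz hkz).alternating_series_le_tendsto
    (tendsto_altChooseSum k e w) 0

lemma altChooseSum_le (hz : 0 < z) (hwz : w ≤ z)
    (hkz : k * truncPow e (z - 1) ≤ truncPow e z) : altChooseSum k e w ≤ truncPow e w := by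
  simpa using (antitone_choose_mul_truncPow hz hwz hkz).tendsto_le_alternating_series
    (tendsto_altChooseSum k e w) 0

lemma sub_le_altChooseSum (hz : 0 < z) (hwz : w ≤ z)
    (hkz : k * truncPow e (z - 1) ≤ truncPow e z) :
    truncPow e w - k * truncPow e (w - 1) ≤ altChooseSum k e w := by
  have := (antitone_choose_mul_truncPow hz hwz hkz).alternating_series_le_tendsto
    (tendsto_altChooseSum k e w) 1
  simpa [sum_range_succ, sub_eq_add_neg] using this

end Bounds

lemma cast_choose_mul_succ (m i : ℕ) :
    (m.choose i : ℝ) * (m + 1) = (m + 1).choose i * ((m : ℝ) + 1 - i) := by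
  rcases le_or_gt i (m + 1) with hi | hi
  · have h := congrArg (Nat.cast (R := ℝ)) (Nat.choose_mul_succ_eq m i)
    push_cast [Nat.cast_sub hi] at h
    exact h
  · rw [Nat.choose_eq_zero_of_lt hi, Nat.choose_eq_zero_of_lt (by omega)]
    simp

lemma cast_choose_add_two_mul (m i : ℕ) :
    ((m + 2).choose i : ℝ) * ((m : ℝ) + 2 - i) * ((m : ℝ) + 1 - i)
      = (m + 2) * (m + 1) * m.choose i := by
  have h1 := cast_choose_mul_succ m i
  have h2 := cast_choose_mul_succ (m + 1) i
  push_cast at h2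
  linear_combination (-((m : ℝ) + 1 - i)) * h2 - ((m : ℝ) + 2) * h1

lemma cast_choose_add_two_succ_mul (m j : ℕ) :
    ((m + 2).choose (j + 1) : ℝ) * (j + 1) * ((m : ℝ) + 1 - j)
      = (m + 2) * (m + 1) * m.choose j := by
  have h1 := cast_choose_mul_succ m j
  have h2 : ((m + 2 : ℕ) : ℝ) * (m + 1).choose j = (m + 2).choose (j + 1) * (j + 1) := by
    exact_mod_cast Nat.add_one_mul_choose_eq (m + 1) j
  push_cast at h2
  linear_combination (-((m : ℝ) + 1 - j)) * h2 - ((m : ℝ) + 2) * h1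

lemma cast_choose_add_two_add_two_mul (m j : ℕ) :
    ((m + 2).choose (j + 2) : ℝ) * (j + 2) * (j + 1) = (m + 2) * (m + 1) * m.choose j := by
  have h1 : ((m + 1 : ℕ) : ℝ) * m.choose j = (m + 1).choose (j + 1) * (j + 1) := by
    exact_mod_cast Nat.add_one_mul_choose_eq m j
  have h2 : ((m + 2 : ℕ) : ℝ) * (m + 1).choose (j + 1) = (m + 2).choose (j + 2) * (j + 2) := by
    exact_mod_cast Nat.add_one_mul_choose_eq (m + 1) (j + 1)
  push_cast at h1 h2
  linear_combination (-((j : ℝ) + 1)) * h2 - ((m : ℝ) + 2) * h1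

section Reindex

variable (m : ℕ) (g : ℝ → ℝ) (w : ℝ)

lemma sum_choose_mul_sub_mul_sub :
    ∑ i ∈ range (m + 2 + 1), (-1) ^ i * ((m + 2).choose i : ℝ) * ((m : ℝ) + 2 - i)
        * ((m : ℝ) + 1 - i) * g (w - i)
      = (m + 2) * (m + 1) * ∑ j ∈ range (m + 1), (-1) ^ j * (m.choose j * g (w - j)) := by
  simp only [← sum_range_neg_one_pow_mul_choose_of_le (by omega : m + 1 ≤ m + 2 + 1), mul_sum]
  refine sum_congr rfl fun i _ => ?_
  linear_combination ((-1) ^ i * g (w - i)) * cast_choose_add_two_mul m i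

lemma sum_choose_mul_mul_sub :
    ∑ i ∈ range (m + 2 + 1), (-1) ^ i * ((m + 2).choose i : ℝ) * i * ((m : ℝ) + 2 - i)
        * g (w - i)
      = -((m + 2) * (m + 1)
          * ∑ j ∈ range (m + 1), (-1) ^ j * (m.choose j * g (w - 1 - j))) := by
  simp only [← sum_range_neg_one_pow_mul_choose_of_le (by omega : m + 1 ≤ m + 2), mul_sum,
    ← sum_neg_distrib]
  rw [sum_range_succ']
  simp only [CharP.cast_eq_zero, mul_zero, zero_mul, add_zero]
  refine sum_congr rfl fun j _ => ?_
  rw [show w - ((j + 1 : ℕ) : ℝ) = w - 1 - j by push_cast; ring]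
  push_cast
  linear_combination ((-1) ^ (j + 1) * g (w - 1 - j)) * cast_choose_add_two_succ_mul m j

lemma sum_choose_mul_mul_sub_one :
    ∑ i ∈ range (m + 2 + 1), (-1) ^ i * ((m + 2).choose i : ℝ) * i * ((i : ℝ) - 1)
        * g (w - i)
      = (m + 2) * (m + 1) * ∑ j ∈ range (m + 1), (-1) ^ j * (m.choose j * g (w - 2 - j)) := by
  rw [sum_range_succ', sum_range_succ', mul_sum]
  simp only [zero_add, Nat.cast_one, sub_self, CharP.cast_eq_zero, mul_zero, zero_mul, add_zero]
  refine sum_congr rfl fun j _ => ?_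
  rw [show w - ((j + 1 + 1 : ℕ) : ℝ) = w - 2 - j by push_cast; ring]
  push_cast
  linear_combination ((-1) ^ j * g (w - 2 - j)) * cast_choose_add_two_add_two_mul m j

end Reindex

noncomputable def pPoly (n i : ℕ) (z : ℝ) : ℝ :=
  (i : ℝ) * (n - i) / (n - 1) - ((n : ℝ) / 2 - i) * (z - i) / (n - 2) +
    2 * n * (z - i) ^ 2 / ((n - 1) * (n - 2))

def coeffA (n z : ℝ) : ℝ := z * (4 * z - (n - 1))

def coeffB (n z : ℝ) : ℝ := 8 * z ^ 2 - 8 * n * z + 3 * n ^ 2 - 5 * n + 6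

def coeffC (n z : ℝ) : ℝ := (n - z) * (3 * n + 1 - 4 * z)

lemma mul_pPoly_eq (m i : ℕ) (hm : m ≠ 0) (z : ℝ) :
    2 * ((m : ℝ) + 1) ^ 2 * m * pPoly (m + 2) i z
      = coeffA (m + 2) z * ((m : ℝ) + 2 - i) * ((m : ℝ) + 1 - i)
        + coeffB (m + 2) z * i * ((m : ℝ) + 2 - i) + coeffC (m + 2) z * i * ((i : ℝ) - 1) := by
  have hm' : (m : ℝ) ≠ 0 := Nat.cast_ne_zero.2 hm
  have hm1 : (m : ℝ) + 1 ≠ 0 := by positivity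
  simp only [pPoly, coeffA, coeffB, coeffC]
  push_cast
  rw [show (m : ℝ) + 2 - 1 = m + 1 by ring, show (m : ℝ) + 2 - 2 = m by ring]
  field_simp
  ring

lemma sum_choose_mul_truncPow_mul_pPoly (m e : ℕ) (hm : m ≠ 0) (z : ℝ) :
    2 * ((m : ℝ) + 1) * m * ∑ i ∈ range (m + 2 + 1),
        (-1) ^ i * ((m + 2).choose i : ℝ) * truncPow e (z - i) * pPoly (m + 2) i z
      = (m + 2) * (coeffA (m + 2) z * altChooseSum m e z
          - coeffB (m + 2) z * altChooseSum m e (z - 1)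
          + coeffC (m + 2) z * altChooseSum m e (z - 2)) := by
  have hm1 : (m : ℝ) + 1 ≠ 0 := by positivity
  refine mul_left_cancel₀ hm1 ?_
  calc ((m : ℝ) + 1) * (2 * ((m : ℝ) + 1) * m * ∑ i ∈ range (m + 2 + 1),
        (-1) ^ i * ((m + 2).choose i : ℝ) * truncPow e (z - i) * pPoly (m + 2) i z)
      = ∑ i ∈ range (m + 2 + 1), (-1) ^ i * ((m + 2).choose i : ℝ) * truncPow e (z - i)
          * (2 * ((m : ℝ) + 1) ^ 2 * m * pPoly (m + 2) i z) := by
        rw [mul_sum, mul_sum]; exact sum_congr rfl fun i _ => by ring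
    _ = coeffA (m + 2) z * ∑ i ∈ range (m + 2 + 1), (-1) ^ i * ((m + 2).choose i : ℝ)
            * ((m : ℝ) + 2 - i) * ((m : ℝ) + 1 - i) * truncPow e (z - i)
        + coeffB (m + 2) z * ∑ i ∈ range (m + 2 + 1), (-1) ^ i * ((m + 2).choose i : ℝ) * i
            * ((m : ℝ) + 2 - i) * truncPow e (z - i)
        + coeffC (m + 2) z * ∑ i ∈ range (m + 2 + 1), (-1) ^ i * ((m + 2).choose i : ℝ) * i
            * ((i : ℝ) - 1) * truncPow e (z - i) := by
        simp only [mul_sum, ← sum_add_distrib, mul_pPoly_eq m _ hm]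
        exact sum_congr rfl fun i _ => by ring
    _ = _ := by
        rw [sum_choose_mul_sub_mul_sub, sum_choose_mul_mul_sub, sum_choose_mul_mul_sub_one]
        simp only [altChooseSum]
        ring

-- `t ↦ a - b t + P t²` is convex, negative at `0` and nonpositive at `1 / n`, hence negative
-- on `[0, 1 / n)`; this is its value at `t = Y / X`, scaled by `X²`.
lemma quadratic_form_neg {n a b P X Y : ℝ} (hn : 0 < n) (ha : a < 0) (hP : 0 ≤ P)
    (hE : n ^ 2 * a - n * b + P ≤ 0) (hY : 0 ≤ Y) (hXY : n * Y < X) :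
    a * X ^ 2 - b * X * Y + P * Y ^ 2 < 0 := by
  have hX : 0 < X := by nlinarith
  have h1 : n * a * X * (X - n * Y) < 0 :=
    mul_neg_of_neg_of_pos (mul_neg_of_neg_of_pos (mul_neg_of_pos_of_neg hn ha) hX) (by linarith)
  have h2 : X * Y * (n ^ 2 * a - n * b + P) ≤ 0 :=
    mul_nonpos_of_nonneg_of_nonpos (by positivity) hE
  have h3 : P * Y * (n * Y - X) ≤ 0 :=
    mul_nonpos_of_nonneg_of_nonpos (by positivity) (by linarith)
  have key : n * (a * X ^ 2 - b * X * Y + P * Y ^ 2)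
      = n * a * X * (X - n * Y) + X * Y * (n ^ 2 * a - n * b + P) + P * Y * (n * Y - X) := by
    ring
  have : n * (a * X ^ 2 - b * X * Y + P * Y ^ 2) < 0 := by linarith
  exact neg_of_mul_neg_right this hn.le

lemma lin_comb_neg_of_bounds {n k a b c X Y Z U V W : ℝ} (hn : 0 < n) (hk : 0 ≤ k)
    (ha : a < 0) (hb : 0 < b) (hc : 0 ≤ c) (hE : n ^ 2 * a - n * (k * a + b) + (k * b + c) ≤ 0)
    (hY : 0 ≤ Y) (hXY : n * Y < X) (hZ : Z * X ≤ Y ^ 2)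
    (hU : X - k * Y ≤ U) (hV : Y - k * Z ≤ V) (hW : W ≤ Z) :
    a * U - b * V + c * W < 0 := by
  have hX : 0 < X := by nlinarith
  have hq := quadratic_form_neg hn ha (by positivity) hE hY hXY
  have hlin : a * U - b * V + c * W ≤ a * X - (k * a + b) * Y + (k * b + c) * Z := by
    nlinarith
  have hZ' : (k * b + c) * Z * X ≤ (k * b + c) * Y ^ 2 := by
    rw [mul_assoc]; exact mul_le_mul_of_nonneg_left hZ (by positivity)
  have : (a * X - (k * a + b) * Y + (k * b + c) * Z) * X < 0 := by nlinarith
  linarith [neg_of_mul_neg_left this hX.le]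

lemma coeffA_neg {n z : ℝ} (hz : 0 < z) (hzn : 4 * z < n - 1) : coeffA n z < 0 :=
  mul_neg_of_pos_of_neg hz (by linarith)

lemma coeffB_pos {n : ℝ} (hn : 3 < n) (z : ℝ) : 0 < coeffB n z := by
  have : coeffB n z = 8 * (z - n / 2) ^ 2 + (n - 2) * (n - 3) := by unfold coeffB; ring
  rw [this]; nlinarith [sq_nonneg (z - n / 2)]

lemma coeffC_pos {n z : ℝ} (hz : 0 < z) (hzn : 4 * z < n - 1) : 0 < coeffC n z :=
  mul_pos (by linarith) (by linarith)

-- `n²` times the quadratic of `quadratic_form_neg` at `1 / n`. It is convex in `z`, negative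
-- at `z = 0` and nonpositive at `z = (n - 1) / 4` once `n ≥ 5`.
lemma coeff_endpoint_nonpos {n z : ℝ} (hz : 1 ≤ z) (hzn : 4 * z < n - 1) :
    2 * n * coeffA n z - 2 * coeffB n z + coeffC n z ≤ 0 := by
  unfold coeffA coeffB coeffC
  have hz0 : 0 ≤ z := by linarith
  have hT : 0 ≤ n - 1 - 4 * z := by linarith
  nlinarith [mul_nonneg (mul_nonneg hz0 hT) (by linarith : (0 : ℝ) ≤ 8 * n - 12),
    mul_nonneg hz0 (by nlinarith : (0 : ℝ) ≤ (3 * n - 5) * (n - 5))]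

lemma coeff_combination_neg {m e : ℕ} (he : e ≠ 0) {z : ℝ} (hz : 0 < z) (hzm : 4 * z < m + 1)
    (hr : ((m : ℝ) + 2) * truncPow e (z - 1) < truncPow e z) :
    coeffA (m + 2) z * altChooseSum m e z - coeffB (m + 2) z * altChooseSum m e (z - 1)
      + coeffC (m + 2) z * altChooseSum m e (z - 2) < 0 := by
  have hzm' : 4 * z < (m + 2 : ℝ) - 1 := by linarith
  have hkz : (m : ℝ) * truncPow e (z - 1) ≤ truncPow e z := by
    nlinarith [truncPow_nonneg e (z - 1)]
  have hU := sub_le_altChooseSum hz le_rfl hkz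
  rcases lt_or_ge z 1 with hz1 | hz1
  · have hY : truncPow e (z - 1) = 0 := truncPow_of_nonpos he (by linarith)
    have hV : altChooseSum m e (z - 1) = 0 := le_antisymm
      (hY ▸ altChooseSum_le hz (by linarith) hkz) (altChooseSum_nonneg hz (by linarith) hkz)
    have hW : altChooseSum m e (z - 2) = 0 := le_antisymm
      (truncPow_of_nonpos he (by linarith : z - 2 ≤ 0) ▸ altChooseSum_le hz (by linarith) hkz)
      (altChooseSum_nonneg hz (by linarith) hkz)
    have hX : 0 < truncPow e z := by rw [truncPow_of_nonneg e hz.le]; positivity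
    rw [hY, mul_zero, sub_zero] at hU
    rw [hV, hW, mul_zero, mul_zero, sub_zero, add_zero]
    exact mul_neg_of_neg_of_pos (coeffA_neg hz hzm') (hX.trans_le hU)
  · have hm : (3 : ℝ) < m + 2 := by linarith
    have hE := coeff_endpoint_nonpos hz1 hzm'
    refine lin_comb_neg_of_bounds (n := m + 2) (k := m) (by positivity) m.cast_nonneg
      (coeffA_neg hz hzm') (coeffB_pos hm z) (coeffC_pos hz hzm').le
      (by linear_combination hE) (truncPow_nonneg e _) hr ?_ hU ?_
      (altChooseSum_le hz (by linarith) hkz)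
    · simpa [sq, show z - 1 - 1 = z - 2 by ring] using
        truncPow_sub_one_mul_le e (by linarith : z - 1 ≤ z)
    · simpa [show z - 1 - 1 = z - 2 by ring] using
        sub_le_altChooseSum hz (by linarith : z - 1 ≤ z) hkz

lemma pow_mul_truncPow_sub_one_lt {r z : ℝ} (e : ℕ) (he : e ≠ 0) (hr : 1 < r) (hz : 0 < z)
    (hzr : z < r / (r - 1)) : r ^ e * truncPow e (z - 1) < truncPow e z := by
  rw [truncPow_of_nonneg e hz.le]
  rcases le_or_gt z 1 with hz1 | hz1
  · rw [truncPow_of_nonpos he (by linarith), mul_zero]; positivity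
  · have hrz : r * (z - 1) < z := by
      rw [lt_div_iff₀ (by linarith)] at hzr; linarith
    rw [truncPow_of_nonneg e (by linarith), ← mul_pow]
    exact pow_lt_pow_left₀ hrz (by nlinarith) he

lemma sum_range_floor_pow_eq_sum_truncPow {e N : ℕ} (he : e ≠ 0) {z : ℝ} (hz : 0 ≤ z)
    (hN : ⌊z⌋₊ ≤ N) (F : ℕ → ℝ → ℝ) (hF : ∀ i, F i 0 = 0) :
    ∑ i ∈ range (⌊z⌋₊ + 1), F i ((z - i) ^ e)
      = ∑ i ∈ range (N + 1), F i (truncPow e (z - i)) := by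
  refine sum_subset_zero_on_sdiff (range_subset_range.2 (by omega)) (fun i hi => ?_)
    (fun i hi => ?_)
  · obtain ⟨-, hiz⟩ := mem_sdiff.1 hi
    have : z < i := Nat.lt_of_floor_lt (by simp at hiz; omega)
    rw [truncPow_of_nonpos he (by linarith), hF]
  · have : (i : ℝ) ≤ z := (Nat.le_floor_iff hz).1 (by simp at hi; omega)
    rw [truncPow_of_nonneg e (by linarith)]

open Finset in
theorem stmt_9 (n : ℕ) (hn : 4 ≤ n) (z : ℝ)
    (hz : 0 < z)
    (hz' : z < min ((n - 1 : ℝ) / 4)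
      ((n : ℝ) ^ ((1 : ℝ) / (n - 3)) / ((n : ℝ) ^ ((1 : ℝ) / (n - 3)) - 1))) :
    ∑ i ∈ range (⌊z⌋₊ + 1), (-1 : ℝ) ^ i * n.choose i * (z - i) ^ (n - 3) *
      ((i : ℝ) * (n - i) / (n - 1) - ((n : ℝ) / 2 - i) * (z - i) / (n - 2) +
        2 * n * (z - i) ^ 2 / ((n - 1) * (n - 2))) < 0 := by
  obtain ⟨m, rfl⟩ : ∃ m, n = m + 2 := ⟨n - 2, by omega⟩
  obtain ⟨hzm, hzr⟩ := lt_min_iff.1 hz'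
  have hexp : ((m + 2 : ℕ) : ℝ) - 3 = (m + 2 - 3 : ℕ) := by
    rw [Nat.cast_sub (by omega)]; push_cast; ring
  generalize hme : m + 2 - 3 = e at hexp ⊢
  have he : e ≠ 0 := by omega
  have hm : (0 : ℝ) < m := by exact_mod_cast (by omega : 0 < m)
  rw [hexp, one_div] at hzr
  have hr : 1 < ((m + 2 : ℕ) : ℝ) ^ (e : ℝ)⁻¹ :=
    Real.one_lt_rpow (by norm_cast; omega) (by positivity)
  have hXY := pow_mul_truncPow_sub_one_lt e he hr hz hzr
  rw [Real.rpow_inv_natCast_pow (by positivity) he] at hXY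
  push_cast at hzm hXY
  have hprod : 2 * ((m : ℝ) + 1) * m * ∑ i ∈ range (m + 2 + 1), (-1) ^ i
      * ((m + 2).choose i : ℝ) * truncPow e (z - i) * pPoly (m + 2) i z < 0 := by
    rw [sum_choose_mul_truncPow_mul_pPoly m e (by omega) z]
    exact mul_neg_of_pos_of_neg (by positivity) (coeff_combination_neg he hz (by linarith) hXY)
  have hfloor : ⌊z⌋₊ ≤ m + 2 := Nat.floor_le_of_le (by push_cast; linarith)
  refine (sum_range_floor_pow_eq_sum_truncPow he hz.le hfloor
    (fun i y => (-1) ^ i * ((m + 2).choose i : ℝ) * y * pPoly (m + 2) i z) (by simp)).trans_lt ?_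
  exact neg_of_mul_neg_right hprod (by positivity)
end

section
/- Let n be an integer with n ≥ 4 and z > 0 a real number. If z < n^(1/(n-3))/(n^(1/(n-3)) - 1), then the sum over i from 0 to ⌊z⌋ of (-1)^i · C(n,i) · (z-i)^(n-3) is positive. -/
/-!
Write `m = n - 3`, `r = n ^ (1 / m)` and `t i = C(n, i) (z - i) ^ m`. The bound on `z` says
`r (z - 1) < z`, i.e. `n (z - 1) ^ m < z ^ m`. Since `C(n, i + 1) ≤ n C(n, i)` and
`(z - i - 1) / (z - i) ≤ (z - 1) / z`, this gives `t (i + 1) ≤ t i` for `i + 1 ≤ z`, with strict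
inequality at `i = 0`. An alternating sum of a nonincreasing nonnegative sequence lies between
`0` and its first term, so the sum is at least `t 0 - t 1 > 0`.
-/

open Finset

theorem alternating_sum_range_succ' {R : Type*} [Ring R] (f : ℕ → R) (k : ℕ) :
    ∑ i ∈ range (k + 1), (-1) ^ i * f i = f 0 - ∑ i ∈ range k, (-1) ^ i * f (i + 1) := by
  simp only [sum_range_succ', pow_succ, mul_neg_one, neg_mul, sum_neg_distrib, pow_zero, one_mul]
  abel

section AlternatingSum

variable {R : Type*} [Ring R] [PartialOrder R] [IsOrderedRing R] {f : ℕ → R}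

theorem Antitone.alternating_sum_range_mem_Icc (hf : Antitone f) (hf0 : ∀ i, 0 ≤ f i) (k : ℕ) :
    ∑ i ∈ range k, (-1) ^ i * f i ∈ Set.Icc 0 (f 0) := by
  induction k generalizing f with
  | zero => simpa using hf0 0
  | succ k ih =>
    obtain ⟨hlow, hup⟩ := ih (f := fun i ↦ f (i + 1)) (fun _ _ h ↦ hf (by omega)) (fun i ↦ hf0 _)
    rw [alternating_sum_range_succ']
    exact ⟨sub_nonneg.2 (hup.trans (hf (Nat.zero_le 1))), sub_le_self _ hlow⟩

theorem Antitone.alternating_sum_range_succ_pos (hf : Antitone f) (hf0 : ∀ i, 0 ≤ f i)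
    (h10 : f 1 < f 0) (k : ℕ) : 0 < ∑ i ∈ range (k + 1), (-1) ^ i * f i := by
  have hup := (Antitone.alternating_sum_range_mem_Icc (f := fun i ↦ f (i + 1))
    (fun _ _ h ↦ hf (by omega)) (fun i ↦ hf0 (i + 1)) k).2
  rw [alternating_sum_range_succ']
  exact sub_pos.2 (hup.trans_lt h10)

end AlternatingSum

theorem Nat.choose_succ_le_mul_choose (n i : ℕ) : n.choose (i + 1) ≤ n * n.choose i :=
  calc n.choose (i + 1) ≤ n.choose (i + 1) * (i + 1) := Nat.le_mul_of_pos_right _ i.succ_pos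
    _ = n.choose i * (n - i) := Nat.choose_succ_right_eq n i
    _ ≤ n * n.choose i := by rw [mul_comm]; exact Nat.mul_le_mul_right _ (Nat.sub_le n i)

theorem mul_sub_one_pow_lt_pow_of_lt_div {r z : ℝ} {m : ℕ} (hr : 1 < r) (hz : 1 ≤ z)
    (hzr : z < r / (r - 1)) (hm : m ≠ 0) : r ^ m * (z - 1) ^ m < z ^ m := by
  have hlt : r * (z - 1) < z := by
    have := (lt_div_iff₀ (sub_pos.2 hr)).1 hzr
    linarith
  rw [← mul_pow]
  exact pow_lt_pow_left₀ hlt (mul_nonneg (by linarith) (by linarith)) hm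

section TruncatedTerm

variable {n m : ℕ} {z : ℝ}

/-- Extended by `0` past `z`, so that the terms form an antitone sequence on all of `ℕ`. -/
noncomputable def truncatedTerm (n m : ℕ) (z : ℝ) (i : ℕ) : ℝ :=
  if (i : ℝ) ≤ z then n.choose i * (z - i) ^ m else 0

theorem truncatedTerm_nonneg (i : ℕ) : 0 ≤ truncatedTerm n m z i := by
  unfold truncatedTerm
  split_ifs with hi
  · exact mul_nonneg (Nat.cast_nonneg _) (pow_nonneg (sub_nonneg.2 hi) m)
  · exact le_rfl

theorem choose_succ_mul_pow_le (hz : 0 < z) (hkey : n * (z - 1) ^ m ≤ z ^ m) {i : ℕ}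
    (hi : (i : ℝ) + 1 ≤ z) :
    (n.choose (i + 1) : ℝ) * (z - (i + 1)) ^ m ≤ n.choose i * (z - i) ^ m := by
  have hzi : 0 ≤ z - i := by linarith
  have hzi1 : 0 ≤ z - (i + 1) := by linarith
  have hshift : (z * (z - (i + 1))) ^ m ≤ ((z - 1) * (z - i)) ^ m :=
    pow_le_pow_left₀ (mul_nonneg hz.le hzi1) (by nlinarith [Nat.cast_nonneg (α := ℝ) i]) m
  have hchoose : (n.choose (i + 1) : ℝ) ≤ n * n.choose i := by
    exact_mod_cast Nat.choose_succ_le_mul_choose n i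
  rw [mul_pow, mul_pow] at hshift
  refine le_of_mul_le_mul_left ?_ (pow_pos hz m)
  calc z ^ m * ((n.choose (i + 1) : ℝ) * (z - (i + 1)) ^ m)
      = n.choose (i + 1) * (z ^ m * (z - (i + 1)) ^ m) := by ring
    _ ≤ n * n.choose i * (z ^ m * (z - (i + 1)) ^ m) :=
        mul_le_mul_of_nonneg_right hchoose (by positivity)
    _ ≤ n * n.choose i * ((z - 1) ^ m * (z - i) ^ m) := by gcongr
    _ = n.choose i * (z - i) ^ m * (n * (z - 1) ^ m) := by ring
    _ ≤ n.choose i * (z - i) ^ m * z ^ m := mul_le_mul_of_nonneg_left hkey (by positivity)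
    _ = z ^ m * (n.choose i * (z - i) ^ m) := by ring

theorem truncatedTerm_antitone (hz : 0 < z) (hkey : 1 ≤ z → n * (z - 1) ^ m ≤ z ^ m) :
    Antitone (truncatedTerm n m z) := by
  refine antitone_nat_of_succ_le fun i ↦ ?_
  by_cases hi : ((i + 1 : ℕ) : ℝ) ≤ z
  · push_cast at hi
    have hi' : (i : ℝ) ≤ z := by linarith
    simp only [truncatedTerm, Nat.cast_succ, if_pos hi, if_pos hi']
    exact choose_succ_mul_pow_le hz (hkey (by linarith [Nat.cast_nonneg (α := ℝ) i])) hi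
  · simp only [truncatedTerm, if_neg hi]
    exact truncatedTerm_nonneg i

theorem truncatedTerm_one_lt_zero (hz : 0 < z) (hkey : 1 ≤ z → n * (z - 1) ^ m < z ^ m) :
    truncatedTerm n m z 1 < truncatedTerm n m z 0 := by
  simp only [truncatedTerm, Nat.cast_one, Nat.cast_zero, if_pos hz.le, Nat.choose_one_right,
    Nat.choose_zero_right, sub_zero, one_mul]
  split_ifs with h1
  · exact hkey h1
  · exact pow_pos hz m

theorem sum_range_floor_eq_sum_truncatedTerm (hz : 0 ≤ z) :
    ∑ i ∈ range (⌊z⌋₊ + 1), (-1 : ℝ) ^ i * n.choose i * (z - i) ^ m =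
      ∑ i ∈ range (⌊z⌋₊ + 1), (-1) ^ i * truncatedTerm n m z i := by
  refine sum_congr rfl fun i hi ↦ ?_
  have hiz : (i : ℝ) ≤ z := (Nat.le_floor_iff hz).1 (Nat.lt_succ_iff.1 (mem_range.1 hi))
  rw [truncatedTerm, if_pos hiz, mul_assoc]

end TruncatedTerm

open Finset in
theorem stmt_17 (n : ℕ) (hn : 4 ≤ n) (z : ℝ) (hz : 0 < z)
    (hz' : z < (n : ℝ) ^ ((1 : ℝ) / (n - 3)) / ((n : ℝ) ^ ((1 : ℝ) / (n - 3)) - 1)) :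
    0 < ∑ i ∈ range (⌊z⌋₊ + 1), (-1 : ℝ) ^ i * n.choose i * (z - i) ^ (n - 3) := by
  set m := n - 3
  have hm : m ≠ 0 := by omega
  have hexp : (1 : ℝ) / (n - 3) = (m : ℝ)⁻¹ := by
    rw [one_div, Nat.cast_sub (by omega : 3 ≤ n), Nat.cast_ofNat]
  rw [hexp] at hz'
  have hr : 1 < (n : ℝ) ^ (m : ℝ)⁻¹ :=
    Real.one_lt_rpow (by exact_mod_cast (by omega : 1 < n)) (by positivity)
  have hkey : 1 ≤ z → n * (z - 1) ^ m < z ^ m := fun hz1 ↦ by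
    simpa only [Real.rpow_inv_natCast_pow (Nat.cast_nonneg n) hm] using
      mul_sub_one_pow_lt_pow_of_lt_div hr hz1 hz' hm
  rw [sum_range_floor_eq_sum_truncatedTerm hz.le]
  exact (truncatedTerm_antitone hz fun h ↦ (hkey h).le).alternating_sum_range_succ_pos
    truncatedTerm_nonneg (truncatedTerm_one_lt_zero hz hkey) _
end
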